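/- The kill rule and the revive rule are confluent with each other: the only overlap of kill: kill(f) \ G^F ⇔ f ∈ F | true and revive: kill(f) \ rem(G^{F_c})^F ⇔ f ∈ F | G^{F_c} is on the kept kill(f) constraint, and the resulting critical pair is trivially joinable. -/

import Mathlib

variable {C J : Type*} [DecidableEq C] [DecidableEq J]

/-- Annotated constraints of CHR with justifications, including the reserved
`rem` and `kill` constraints. `user c F` is a (non-reserved) constraint `c`
annotated with justification set `F`; `rem c Fc F` remembers the removed
constraint `c^{Fc}` and is itself annotated with `F`; `kill f` requests
logical retraction of justification `f`. -/
inductive AC (C J : Type*) where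
  | user : C → Finset J → AC C J
  | rem : C → Finset J → Finset J → AC C J
  | kill : J → AC C J
deriving DecidableEq

/-- The kill rule: `kill(f) \ G^F ⇔ f ∈ F | true`, for non-reserved `G`. -/
def KillStep (S T : Multiset (AC C J)) : Prop :=
  ∃ (f : J) (c : C) (F : Finset J) (G : Multiset (AC C J)),
    f ∈ F ∧ S = AC.kill f ::ₘ AC.user c F ::ₘ G ∧ T = AC.kill f ::ₘ G

/-- The revive rule: `kill(f) \ rem(G^{F_c})^F ⇔ f ∈ F | G^{F_c}`. -/
def ReviveStep (S T : Multiset (AC C J)) : Prop :=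
  ∃ (f : J) (c : C) (Fc F : Finset J) (G : Multiset (AC C J)),
    f ∈ F ∧ S = AC.kill f ::ₘ AC.rem c Fc F ::ₘ G ∧
      T = AC.kill f ::ₘ AC.user c Fc ::ₘ G

/-- A state contains at most one `kill(f)` constraint per justification `f`. -/
def AtMostOneKill (S : Multiset (AC C J)) : Prop :=
  ∀ f : J, S.count (AC.kill f) ≤ 1

/-! The kill rule removes a `user` constraint and the revive rule removes a `rem` constraint;
these are different constraints, and neither rule removes the `kill` constraints. So after
either step the other rule still applies to the same constraints, and both orders produce the
same state. -/

namespace Multiset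

variable {α : Type*} [DecidableEq α]

theorem eq_cons_cons_erase_erase {a b : α} {s : Multiset α} (ha : a ∈ s.erase b) (hb : b ∈ s) :
    s = b ::ₘ a ::ₘ (s.erase b).erase a := by
  rw [cons_erase ha, cons_erase hb]

end Multiset

section Steps

variable {S T : Multiset (AC C J)}

theorem killStep_iff : KillStep S T ↔ ∃ (f : J) (c : C) (F : Finset J),
    f ∈ F ∧ AC.kill f ∈ S ∧ AC.user c F ∈ S ∧ T = S.erase (AC.user c F) := by
  constructor
  · rintro ⟨f, c, F, G, hf, rfl, rfl⟩
    refine ⟨f, c, F, hf, by simp, by simp, ?_⟩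
    rw [Multiset.erase_cons_tail _ (by simp), Multiset.erase_cons_head]
  · rintro ⟨f, c, F, hf, hk, hu, rfl⟩
    have hk' : AC.kill f ∈ S.erase (AC.user c F) := Multiset.mem_erase_of_ne (by simp) |>.2 hk
    refine ⟨f, c, F, (S.erase (AC.user c F)).erase (AC.kill f), hf, ?_,
      (Multiset.cons_erase hk').symm⟩
    rw [Multiset.cons_swap]
    exact Multiset.eq_cons_cons_erase_erase hk' hu

theorem reviveStep_iff : ReviveStep S T ↔ ∃ (f : J) (c : C) (Fc F : Finset J),
    f ∈ F ∧ AC.kill f ∈ S ∧ AC.rem c Fc F ∈ S ∧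
      T = AC.user c Fc ::ₘ S.erase (AC.rem c Fc F) := by
  constructor
  · rintro ⟨f, c, Fc, F, G, hf, rfl, rfl⟩
    refine ⟨f, c, Fc, F, hf, by simp, by simp, ?_⟩
    rw [Multiset.erase_cons_tail _ (by simp), Multiset.erase_cons_head, Multiset.cons_swap]
  · rintro ⟨f, c, Fc, F, hf, hk, hr, rfl⟩
    have hk' : AC.kill f ∈ S.erase (AC.rem c Fc F) :=
      Multiset.mem_erase_of_ne (by simp) |>.2 hk
    refine ⟨f, c, Fc, F, (S.erase (AC.rem c Fc F)).erase (AC.kill f), hf, ?_, ?_⟩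
    · rw [Multiset.cons_swap]
      exact Multiset.eq_cons_cons_erase_erase hk' hr
    · rw [Multiset.cons_swap, Multiset.cons_erase hk']

end Steps

theorem kill_confluent_with_revive_general (S T₁ T₂ : Multiset (AC C J))
    (h₁ : KillStep S T₁) (h₂ : ReviveStep S T₂) :
    ∃ U₁ U₂ : Multiset (AC C J),
      Relation.ReflTransGen (fun a b => KillStep a b ∨ ReviveStep a b) T₁ U₁ ∧
      Relation.ReflTransGen (fun a b => KillStep a b ∨ ReviveStep a b) T₂ U₂ ∧
      U₁ = U₂ := by
  obtain ⟨f, c, F, hf, hk, hu, rfl⟩ := killStep_iff.1 h₁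
  obtain ⟨f', c', Fc, F', hf', hk', hr, rfl⟩ := reviveStep_iff.1 h₂
  have hu' : AC.user c F ∈ S.erase (AC.rem c' Fc F') := by simp [Multiset.mem_erase_of_ne, hu]
  have revive_after_kill : ReviveStep (S.erase (AC.user c F))
      (AC.user c' Fc ::ₘ (S.erase (AC.user c F)).erase (AC.rem c' Fc F')) :=
    reviveStep_iff.2 ⟨f', c', Fc, F', hf', by simp [Multiset.mem_erase_of_ne, hk'],
      by simp [Multiset.mem_erase_of_ne, hr], rfl⟩
  have kill_after_revive : KillStep (AC.user c' Fc ::ₘ S.erase (AC.rem c' Fc F'))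
      ((AC.user c' Fc ::ₘ S.erase (AC.rem c' Fc F')).erase (AC.user c F)) :=
    killStep_iff.2 ⟨f, c, F, hf, by simp [Multiset.mem_erase_of_ne, hk],
      Multiset.mem_cons_of_mem hu', rfl⟩
  refine ⟨_, _, .single (.inr revive_after_kill), .single (.inl kill_after_revive), ?_⟩
  rw [Multiset.erase_cons_tail_of_mem hu', Multiset.erase_comm]

/-- The kill and revive rules are confluent with each other: any critical pair
arising from applying the kill rule and the revive rule to a common overlap
state (with at most one `kill(f)` per justification) is joinable; indeed it is
trivially joinable since the only overlap is on the kept `kill(f)` constraint,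
which neither rule removes. -/
theorem kill_confluent_with_revive (S T₁ T₂ : Multiset (AC C J))
    (hS : AtMostOneKill S) (h₁ : KillStep S T₁) (h₂ : ReviveStep S T₂) :
    ∃ U₁ U₂ : Multiset (AC C J),
      Relation.ReflTransGen (fun a b => KillStep a b ∨ ReviveStep a b) T₁ U₁ ∧
      Relation.ReflTransGen (fun a b => KillStep a b ∨ ReviveStep a b) T₂ U₂ ∧
      U₁ = U₂ :=
  kill_confluent_with_revive_general S T₁ T₂ h₁ h₂
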